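/- arXiv:2004.04844 — 2 statements merged into one kernel-verified Lean document; each statement's English description precedes it below -/
import Mathlib

section
/- Hölder continuity of the discounted disutility: if $h$ is $\alpha$-Hölder with constant $h_0$ ($0 < \alpha \le 1$), $\delta > \alpha\omega$, and $\mathbb{E}[|X^x_s - X^y_s|] \le e^{\omega s}|x-y|$, then $\mathbb{E}[\int_0^\infty (h(X^x_s) - h(X^y_s))e^{-\delta s}ds] \le \frac{h_0}{\delta - \alpha\omega}|x-y|^\alpha$. -/
open MeasureTheory

section aux
variable {Ω : Type*} [MeasurableSpace Ω] (ℙ : Measure Ω) [IsFiniteMeasure ℙ]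

lemma stmt8_int_of_bdd {f : Ω → ℝ} (hm : AEStronglyMeasurable f ℙ) (C : ℝ)
    (hC : ∀ ω, ‖f ω‖ ≤ C) : Integrable f ℙ :=
  (integrable_const C).mono' hm (Filter.Eventually.of_forall hC)

lemma stmt8_jensen {α : ℝ} (hα0 : 0 < α) (hα1 : α ≤ 1) [IsProbabilityMeasure ℙ]
    {f : Ω → ℝ} (hm : Measurable f) (h0 : ∀ ω, 0 ≤ f ω) (h1 : ∀ ω, f ω ≤ 1) :
    ∫ ω, f ω ^ α ∂ℙ ≤ (∫ ω, f ω ∂ℙ) ^ α := by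
  have hcont : ContinuousOn (fun t : ℝ => t ^ α) (Set.Ici 0) := fun t _ =>
    (Real.continuousAt_rpow_const t α (Or.inr hα0.le)).continuousWithinAt
  refine (Real.concaveOn_rpow hα0.le hα1).le_map_integral hcont isClosed_Ici
    (Filter.Eventually.of_forall h0) ?_ ?_
  · exact stmt8_int_of_bdd ℙ hm.aestronglyMeasurable 1
      (fun ω => by rw [Real.norm_eq_abs, abs_of_nonneg (h0 ω)]; exact h1 ω)
  · refine stmt8_int_of_bdd ℙ
      ((Real.continuous_rpow_const hα0.le).measurable.comp hm).aestronglyMeasurable 1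
      (fun ω => ?_)
    simp only [Function.comp_apply, Real.norm_eq_abs,
      abs_of_nonneg (Real.rpow_nonneg (h0 ω) α)]
    exact Real.rpow_le_one (h0 ω) (h1 ω) hα0.le
end aux

/-- Hölder continuity of the discounted disutility: if `h` is
`α`-Hölder with constant `h₀` on `[0,1]`, `δ > α w`, and
`E[|X s - Y s|] ≤ exp (w s) |x - y|`, then
`E[∫_0^∞ (h (X s) - h (Y s)) e^{-δ s} ds] ≤ (h₀ / (δ - α w)) |x - y|^α`. -/
theorem stmt8 {Ω : Type*} [MeasurableSpace Ω] (ℙ : Measure Ω) [IsProbabilityMeasure ℙ]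
    (h : ℝ → ℝ) (h₀ α w δ : ℝ)
    (hα0 : 0 < α) (hα1 : α ≤ 1) (hw : 0 < w) (hδ : α * w < δ) (hh₀ : 0 ≤ h₀)
    (X Y : ℝ → Ω → ℝ) (x y : ℝ)
    (hx : x ∈ Set.Icc (0 : ℝ) 1) (hy : y ∈ Set.Icc (0 : ℝ) 1)
    (hXm : Measurable fun p : ℝ × Ω => X p.1 p.2)
    (hYm : Measurable fun p : ℝ × Ω => Y p.1 p.2)
    (hhm : Measurable h)
    (hX01 : ∀ s ω, X s ω ∈ Set.Icc (0 : ℝ) 1)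
    (hY01 : ∀ s ω, Y s ω ∈ Set.Icc (0 : ℝ) 1)
    (hHolder : ∀ u v : ℝ, u ∈ Set.Icc (0 : ℝ) 1 → v ∈ Set.Icc (0 : ℝ) 1 →
      h u - h v ≤ h₀ * |u - v| ^ α)
    (hmom : ∀ s : ℝ, 0 ≤ s →
      ∫ ω, |X s ω - Y s ω| ∂ℙ ≤ Real.exp (w * s) * |x - y|) :
    ∫ ω, (∫ s in Set.Ioi (0 : ℝ), (h (X s ω) - h (Y s ω)) * Real.exp (-δ * s)) ∂ℙ ≤
      h₀ / (δ - α * w) * |x - y| ^ α := by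
  set ν : Measure ℝ := volume.restrict (Set.Ioi (0 : ℝ)) with hν
  set b : ℝ := δ - α * w with hb
  have hbpos : 0 < b := by simp [hb]; linarith
  -- basic diff bounds
  have habs : ∀ u v : ℝ, u ∈ Set.Icc (0:ℝ) 1 → v ∈ Set.Icc (0:ℝ) 1 → |u - v| ≤ 1 := by
    intro u v hu hv
    rw [abs_le]; constructor <;> [linarith [hu.1, hv.2]; linarith [hu.2, hv.1]]
  have hdiff : ∀ u v : ℝ, u ∈ Set.Icc (0:ℝ) 1 → v ∈ Set.Icc (0:ℝ) 1 →
      |h u - h v| ≤ h₀ := by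
    intro u v hu hv
    have h1 : |u - v| ^ α ≤ 1 := Real.rpow_le_one (abs_nonneg _) (habs u v hu hv) hα0.le
    have h2 : |v - u| ^ α ≤ 1 := Real.rpow_le_one (abs_nonneg _) (habs v u hv hu) hα0.le
    have b1 := (hHolder u v hu hv).trans
      ((mul_le_mul_of_nonneg_left h1 hh₀).trans (le_of_eq (mul_one _)))
    have b2 := (hHolder v u hv hu).trans
      ((mul_le_mul_of_nonneg_left h2 hh₀).trans (le_of_eq (mul_one _)))
    rw [abs_le]; constructor <;> linarith
  -- measurability on the product
  have hXm' : Measurable fun p : Ω × ℝ => X p.2 p.1 := hXm.comp measurable_swap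
  have hYm' : Measurable fun p : Ω × ℝ => Y p.2 p.1 := hYm.comp measurable_swap
  have hFm : Measurable fun p : Ω × ℝ =>
      (h (X p.2 p.1) - h (Y p.2 p.1)) * Real.exp (-δ * p.2) :=
    ((hhm.comp hXm').sub (hhm.comp hYm')).mul ((measurable_snd.const_mul (-δ)).exp)
  -- integrability of the dominating function on the product
  have hgint : Integrable (fun p : Ω × ℝ => h₀ * Real.exp (-δ * p.2)) (ℙ.prod ν) := by
    have hδ0 : 0 < δ := lt_of_le_of_lt (by positivity) hδ
    have hexp : Integrable (fun s : ℝ => Real.exp (-δ * s)) ν :=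
      exp_neg_integrableOn_Ioi 0 hδ0
    have hm : AEStronglyMeasurable (fun p : Ω × ℝ => h₀ * Real.exp (-δ * p.2)) (ℙ.prod ν) :=
      (((measurable_snd.const_mul (-δ)).exp).const_mul h₀).aestronglyMeasurable
    rw [integrable_prod_iff hm]
    constructor
    · exact Filter.Eventually.of_forall (fun ω => hexp.const_mul h₀)
    · exact integrable_const (∫ s, ‖h₀ * Real.exp (-δ * s)‖ ∂ν)
  -- integrability of F on the product
  have hFint : Integrable (fun p : Ω × ℝ =>
      (h (X p.2 p.1) - h (Y p.2 p.1)) * Real.exp (-δ * p.2)) (ℙ.prod ν) := by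
    refine hgint.mono' hFm.aestronglyMeasurable (Filter.Eventually.of_forall fun p => ?_)
    rw [Real.norm_eq_abs, abs_mul, abs_of_pos (Real.exp_pos _)]
    have := hdiff _ _ (hX01 p.2 p.1) (hY01 p.2 p.1)
    exact mul_le_mul_of_nonneg_right this (Real.exp_pos _).le
  -- Fubini swap
  have hswap : ∫ ω, (∫ s, (h (X s ω) - h (Y s ω)) * Real.exp (-δ * s) ∂ν) ∂ℙ
      = ∫ s, (∫ ω, (h (X s ω) - h (Y s ω)) * Real.exp (-δ * s) ∂ℙ) ∂ν :=
    integral_integral_swap hFint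
  rw [show (∫ ω, (∫ s in Set.Ioi (0:ℝ), (h (X s ω) - h (Y s ω)) * Real.exp (-δ * s)) ∂ℙ)
      = ∫ ω, (∫ s, (h (X s ω) - h (Y s ω)) * Real.exp (-δ * s) ∂ν) ∂ℙ from rfl, hswap]
  -- pointwise inner bound
  have hinner : ∀ s : ℝ, 0 ≤ s →
      (∫ ω, (h (X s ω) - h (Y s ω)) * Real.exp (-δ * s) ∂ℙ)
        ≤ h₀ * |x - y| ^ α * Real.exp (-b * s) := by
    intro s hs
    have hXsm : Measurable fun ω => X s ω := hXm.comp measurable_prodMk_left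
    have hYsm : Measurable fun ω => Y s ω := hYm.comp measurable_prodMk_left
    have habsm : Measurable fun ω => |X s ω - Y s ω| := (hXsm.sub hYsm).abs
    have hint1 : Integrable (fun ω => h (X s ω) - h (Y s ω)) ℙ :=
      stmt8_int_of_bdd ℙ ((hhm.comp hXsm).sub (hhm.comp hYsm)).aestronglyMeasurable h₀
        (fun ω => hdiff _ _ (hX01 s ω) (hY01 s ω))
    have hint2 : Integrable (fun ω => h₀ * |X s ω - Y s ω| ^ α) ℙ := by
      refine stmt8_int_of_bdd ℙ ((((Real.continuous_rpow_const hα0.le).measurable.comp habsm).const_mul h₀)).aestronglyMeasurable h₀ fun ω => ?_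
      rw [Real.norm_eq_abs, abs_mul, abs_of_nonneg hh₀,
        abs_of_nonneg (Real.rpow_nonneg (abs_nonneg _) α)]
      have : |X s ω - Y s ω| ^ α ≤ 1 :=
        Real.rpow_le_one (abs_nonneg _) (habs _ _ (hX01 s ω) (hY01 s ω)) hα0.le
      nlinarith
    have step1 : ∫ ω, (h (X s ω) - h (Y s ω)) ∂ℙ ≤ ∫ ω, h₀ * |X s ω - Y s ω| ^ α ∂ℙ :=
      integral_mono hint1 hint2 fun ω => hHolder _ _ (hX01 s ω) (hY01 s ω)
    have step2 : ∫ ω, |X s ω - Y s ω| ^ α ∂ℙ ≤ (∫ ω, |X s ω - Y s ω| ∂ℙ) ^ α :=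
      stmt8_jensen ℙ hα0 hα1 habsm (fun ω => abs_nonneg _)
        (fun ω => habs _ _ (hX01 s ω) (hY01 s ω))
    have step3 : (∫ ω, |X s ω - Y s ω| ∂ℙ) ^ α ≤ (Real.exp (w * s) * |x - y|) ^ α := by
      refine Real.rpow_le_rpow (integral_nonneg fun ω => abs_nonneg _) (hmom s hs) hα0.le
    have step4 : (Real.exp (w * s) * |x - y|) ^ α
        = Real.exp (α * w * s) * |x - y| ^ α := by
      rw [Real.mul_rpow (Real.exp_pos _).le (abs_nonneg _), ← Real.exp_log (Real.exp_pos (w*s)),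
        Real.log_exp, ← Real.exp_mul]
      ring_nf
    have hIntConst : ∫ ω, (h (X s ω) - h (Y s ω)) * Real.exp (-δ * s) ∂ℙ
        = (∫ ω, (h (X s ω) - h (Y s ω)) ∂ℙ) * Real.exp (-δ * s) := integral_mul_const _ _
    rw [hIntConst]
    have hI : ∫ ω, (h (X s ω) - h (Y s ω)) ∂ℙ ≤ h₀ * Real.exp (α * w * s) * |x - y| ^ α := by
      calc ∫ ω, (h (X s ω) - h (Y s ω)) ∂ℙ ≤ ∫ ω, h₀ * |X s ω - Y s ω| ^ α ∂ℙ := step1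
        _ = h₀ * ∫ ω, |X s ω - Y s ω| ^ α ∂ℙ := integral_const_mul _ _
        _ ≤ h₀ * (Real.exp (w * s) * |x - y|) ^ α := by
            exact mul_le_mul_of_nonneg_left (step2.trans step3) hh₀
        _ = h₀ * Real.exp (α * w * s) * |x - y| ^ α := by rw [step4]; ring
    calc (∫ ω, (h (X s ω) - h (Y s ω)) ∂ℙ) * Real.exp (-δ * s)
        ≤ (h₀ * Real.exp (α * w * s) * |x - y| ^ α) * Real.exp (-δ * s) :=
          mul_le_mul_of_nonneg_right hI (Real.exp_pos _).le
      _ = h₀ * |x - y| ^ α * Real.exp (-b * s) := by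
          have he : Real.exp (α * w * s) * Real.exp (-δ * s) = Real.exp (-b * s) := by
            rw [← Real.exp_add]; congr 1; rw [hb]; ring
          rw [← he]; ring
  -- integrate the bound
  have hLHSint : Integrable (fun s => ∫ ω, (h (X s ω) - h (Y s ω)) * Real.exp (-δ * s) ∂ℙ) ν := by
    simpa using hFint.integral_prod_right
  have hRHSint : Integrable (fun s => h₀ * |x - y| ^ α * Real.exp (-b * s)) ν :=
    (exp_neg_integrableOn_Ioi 0 hbpos).const_mul _
  have hle : ∫ s, (∫ ω, (h (X s ω) - h (Y s ω)) * Real.exp (-δ * s) ∂ℙ) ∂ν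
      ≤ ∫ s, h₀ * |x - y| ^ α * Real.exp (-b * s) ∂ν := by
    refine setIntegral_mono_on hLHSint hRHSint measurableSet_Ioi fun s hs => hinner s (le_of_lt hs)
  refine hle.trans ?_
  have hval : ∫ s, Real.exp (-b * s) ∂ν = b⁻¹ := by
    have := integral_comp_mul_left_Ioi (fun y : ℝ => Real.exp (-y)) 0 hbpos
    simp only [mul_zero, neg_mul] at this ⊢
    rw [show (fun s : ℝ => Real.exp (-(b * s))) = fun s : ℝ => (fun y => Real.exp (-y)) (b * s)
      from rfl]
    rw [hν, this, integral_exp_neg_Ioi_zero, smul_eq_mul, mul_one]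
  rw [integral_const_mul, hval]
  exact le_of_eq (by rw [div_eq_mul_inv]; ring)
end

section
/- Comparison/uniqueness for a discrete optimality system: let $J, \Lambda$ be finite sets and $\underline{\Psi}, \bar{\Psi} : J \times \Lambda \to \mathbb{R}$ with $\underline{\Phi}(i) = \inf_r \underline{\Psi}(i,r)$, $\bar{\Phi}(i) = \inf_r \bar{\Psi}(i,r)$ (no state variable, i.e., the 'zero-dimensional' version). Suppose for all $(i,r)$: $\delta\underline{\Psi}(i,r) + \sum_{j\ne i} w_{ij}(\underline{\Psi}(i,r) - \underline{\Psi}(j,r)) + r(\underline{\Psi}(i,r) - \mathcal{M}\underline{\Phi}(i)) \le h_i$ and the reverse inequality for $\bar{\Psi}, \bar{\Phi}$, where $\mathcal{M}\Phi(i) = \inf_{z \in Z}\{\Phi(i) + K(i,z)\}$ with $Z$ finite, $K \ge 0$, $w_{ij} \ge 0$, $\delta > 0$, $r > 0$. Then $\underline{\Psi} \le \bar{\Psi}$ on $J \times \Lambda$ and $\underline{\Phi} \le \bar{\Phi}$ on $J$. -/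
/-- comparison/uniqueness for the zero-dimensional discrete optimality
system: if `Ψl` is a subsolution and `Ψu` a supersolution of
`δ Ψ(i,r) + ∑_{j ≠ i} w i j (Ψ(i,r) - Ψ(j,r)) + rate r (Ψ(i,r) - MΦ i) = h i`,
where `Φ i = ⨅ r, Ψ i r` and `MΦ i = ⨅ z, (Φ i + K i z)`, with `δ > 0`,
`rate r > 0`, `w ≥ 0`, `K ≥ 0` and all index sets finite, then `Ψl ≤ Ψu` and
`Φl ≤ Φu`. -/
theorem stmt14 {J Λ Z : Type*} [Fintype J] [DecidableEq J] [Fintype Λ] [Fintype Z]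
    [Nonempty Λ] [Nonempty Z]
    (Ψl Ψu : J → Λ → ℝ) (h : J → ℝ) (w : J → J → ℝ) (K : J → Z → ℝ)
    (rate : Λ → ℝ) (δ : ℝ)
    (hδ : 0 < δ) (hrate : ∀ r, 0 < rate r)
    (hw : ∀ i j, 0 ≤ w i j) (hK : ∀ i z, 0 ≤ K i z)
    (hsub : ∀ i r, δ * Ψl i r +
        ∑ j ∈ Finset.univ.erase i, w i j * (Ψl i r - Ψl j r) +
        rate r * (Ψl i r - ⨅ z : Z, ((⨅ r' : Λ, Ψl i r') + K i z)) ≤ h i)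
    (hsup : ∀ i r, h i ≤ δ * Ψu i r +
        ∑ j ∈ Finset.univ.erase i, w i j * (Ψu i r - Ψu j r) +
        rate r * (Ψu i r - ⨅ z : Z, ((⨅ r' : Λ, Ψu i r') + K i z))) :
    (∀ i r, Ψl i r ≤ Ψu i r) ∧
      ∀ i, (⨅ r : Λ, Ψl i r) ≤ ⨅ r : Λ, Ψu i r := by
  have key : ∀ i r, Ψl i r ≤ Ψu i r := by
    by_contra hc
    push_neg at hc
    obtain ⟨i0, r0, hir⟩ := hc
    haveI : Nonempty J := ⟨i0⟩
    obtain ⟨⟨iM, rM⟩, hmax⟩ := Finite.exists_max (fun p : J × Λ => Ψl p.1 p.2 - Ψu p.1 p.2)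
    have hmax' : ∀ j r, Ψl j r - Ψu j r ≤ Ψl iM rM - Ψu iM rM := fun j r => hmax (j, r)
    have hMpos : 0 < Ψl iM rM - Ψu iM rM := lt_of_lt_of_le (sub_pos.mpr hir) (hmax (i0, r0))
    -- Φl iM ≤ Φu iM + M
    obtain ⟨rs, hrs⟩ := Finite.exists_min (fun r => Ψu iM r)
    have hΦ : (⨅ r' : Λ, Ψl iM r') ≤ (⨅ r' : Λ, Ψu iM r') + (Ψl iM rM - Ψu iM rM) := by
      have h1 : (⨅ r' : Λ, Ψl iM r') ≤ Ψl iM rs := ciInf_le ((Set.finite_range _).bddBelow) rs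
      have h2 : Ψu iM rs ≤ ⨅ r' : Λ, Ψu iM r' := le_ciInf hrs
      have h3 := hmax' iM rs
      linarith
    -- MΦl iM ≤ MΦu iM + M
    obtain ⟨z0, hz0⟩ := Finite.exists_min (fun z => (⨅ r' : Λ, Ψu iM r') + K iM z)
    have hMl : (⨅ z : Z, ((⨅ r' : Λ, Ψl iM r') + K iM z)) ≤
        (⨅ z : Z, ((⨅ r' : Λ, Ψu iM r') + K iM z)) + (Ψl iM rM - Ψu iM rM) := by
      have h1 : (⨅ z : Z, ((⨅ r' : Λ, Ψl iM r') + K iM z)) ≤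
          (⨅ r' : Λ, Ψl iM r') + K iM z0 := ciInf_le ((Set.finite_range _).bddBelow) z0
      have h2 : (⨅ r' : Λ, Ψu iM r') + K iM z0 ≤
          ⨅ z : Z, ((⨅ r' : Λ, Ψu iM r') + K iM z) := le_ciInf hz0
      linarith
    -- sum comparison
    have hsum : ∑ j ∈ Finset.univ.erase iM, w iM j * (Ψu iM rM - Ψu j rM) -
        ∑ j ∈ Finset.univ.erase iM, w iM j * (Ψl iM rM - Ψl j rM) ≤ 0 := by
      rw [← Finset.sum_sub_distrib]
      apply Finset.sum_nonpos
      intro j _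
      have e : w iM j * (Ψu iM rM - Ψu j rM) - w iM j * (Ψl iM rM - Ψl j rM) =
          w iM j * ((Ψl j rM - Ψu j rM) - (Ψl iM rM - Ψu iM rM)) := by ring
      rw [e]
      exact mul_nonpos_of_nonneg_of_nonpos (hw iM j) (by linarith [hmax' j rM])
    -- rate term comparison
    have hrt : rate rM * (Ψu iM rM - ⨅ z : Z, ((⨅ r' : Λ, Ψu iM r') + K iM z)) -
        rate rM * (Ψl iM rM - ⨅ z : Z, ((⨅ r' : Λ, Ψl iM r') + K iM z)) ≤ 0 := by
      have e : rate rM * (Ψu iM rM - ⨅ z : Z, ((⨅ r' : Λ, Ψu iM r') + K iM z)) -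
          rate rM * (Ψl iM rM - ⨅ z : Z, ((⨅ r' : Λ, Ψl iM r') + K iM z)) =
          rate rM * (((⨅ z : Z, ((⨅ r' : Λ, Ψl iM r') + K iM z)) -
            ⨅ z : Z, ((⨅ r' : Λ, Ψu iM r') + K iM z)) - (Ψl iM rM - Ψu iM rM)) := by ring
      rw [e]
      exact mul_nonpos_of_nonneg_of_nonpos (le_of_lt (hrate rM)) (by linarith)
    have e1 := hsub iM rM
    have e2 := hsup iM rM
    have hδM : 0 < δ * (Ψl iM rM - Ψu iM rM) := mul_pos hδ hMpos
    have hd : δ * Ψl iM rM - δ * Ψu iM rM = δ * (Ψl iM rM - Ψu iM rM) := by ring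
    linarith
  refine ⟨key, fun i => ciInf_mono ((Set.finite_range _).bddBelow) (fun r => key i r)⟩
end
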